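/- Define G(x,y) = (x + 2y)/(x(1+x²)) - 1/(y-x)² for distinct nonzero reals x, y. Then G(x,y) = lim_{ε→0} (f'_{x,ε}(y) - 1)/ε², where f_{x,ε}(z) = b(g_{x,ε}(z) - c)/(b² + (c-a)(g_{x,ε}(z) - a)) with g_{x,ε}(z) = z + ε²/(z-x), a = Re g_{x,ε}(i), b = Im g_{x,ε}(i), c = g_{x,ε}(0). -/

import Mathlib

open Complex Filter

/-- The map `g_{x,ε}(z) = z + ε²/(z - x)`. -/
noncomputable def gMap (x ε : ℝ) (z : ℂ) : ℂ := z + (ε : ℂ)^2 / (z - x)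

/-- The normalized conformal map `f_{x,ε}` from `ℍ \ B̄(x,ε)` onto `ℍ` fixing `0` and `i`. -/
noncomputable def fMap (x ε : ℝ) (z : ℂ) : ℂ :=
  let a : ℂ := ((gMap x ε Complex.I).re : ℝ)
  let b : ℂ := ((gMap x ε Complex.I).im : ℝ)
  let c : ℂ := gMap x ε 0
  b * (gMap x ε z - c) / (b^2 + (c - a) * (gMap x ε z - a))

/-! Writing `t = ε²`, the coefficients `a, b, c` of `f_{x,ε}` are affine in `t`, so by the
chain rule `f'_{x,ε}(y) = g'_{x,ε}(y) · M'(g_{x,ε}(y))`, with `M` the normalizing Möbius map,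
is a rational function `Φ(t)` (`fMap.derivAtSq`) that is regular at `t = 0` with `Φ(0) = 1`.
The limit is therefore `Φ'(0)`, and differentiating `Φ` at `0` gives `G(x,y)`. -/

open Topology

theorem tendsto_sub_div_sq_of_hasDerivAt {φ : ℂ → ℂ} {L : ℂ} (h : HasDerivAt φ L 0) :
    Tendsto (fun ε : ℝ => (φ ((ε : ℂ) ^ 2) - φ 0) / (ε : ℂ) ^ 2) (𝓝[≠] 0) (𝓝 L) := by
  have hsq : Tendsto (fun ε : ℝ => (ε : ℂ) ^ 2) (𝓝[≠] 0) (𝓝[≠] 0) := by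
    refine tendsto_nhdsWithin_of_tendsto_nhds_of_eventually_within _ ?_ ?_
    · exact ((continuous_ofReal.pow 2).tendsto' 0 0 (by simp)).mono_left nhdsWithin_le_nhds
    · filter_upwards [self_mem_nhdsWithin] with ε hε
      simpa using hε
  refine ((hasDerivAt_iff_tendsto_slope_zero.mp h).comp hsq).congr fun ε => ?_
  simp [div_eq_inv_mul]

/-- The Möbius map sending `c ↦ 0` and `a + b i ↦ i`. -/
noncomputable def normalizingMobius (a b c w : ℂ) : ℂ :=
  b * (w - c) / (b ^ 2 + (c - a) * (w - a))

theorem hasDerivAt_normalizingMobius {a b c w : ℂ} (hw : b ^ 2 + (c - a) * (w - a) ≠ 0) :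
    HasDerivAt (normalizingMobius a b c)
      (b * (b ^ 2 + (c - a) ^ 2) / (b ^ 2 + (c - a) * (w - a)) ^ 2) w := by
  have hnum := ((hasDerivAt_id' w).sub_const c).const_mul b
  have hden := (((hasDerivAt_id' w).sub_const a).const_mul (c - a)).const_add (b ^ 2)
  exact (hnum.div hden hw).congr_deriv (by ring)

theorem hasDerivAt_gMap (x ε : ℝ) {z : ℂ} (hz : z ≠ x) :
    HasDerivAt (gMap x ε) (1 - (ε : ℂ) ^ 2 / (z - x) ^ 2) z := by
  exact ((hasDerivAt_id' z).add ((hasDerivAt_const z ((ε : ℂ) ^ 2)).div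
    ((hasDerivAt_id' z).sub_const (x : ℂ)) (sub_ne_zero.mpr hz))).congr_deriv (by ring)

theorem gMap_I (x ε : ℝ) :
    gMap x ε I = (-(ε ^ 2 * x) / (1 + x ^ 2) : ℝ) + (1 - ε ^ 2 / (1 + x ^ 2) : ℝ) * I := by
  have hx : (1 + x ^ 2 : ℂ) ≠ 0 := by exact_mod_cast (by positivity : (1 + x ^ 2 : ℝ) ≠ 0)
  have hIx : I - x ≠ 0 := fun h => by simpa using congrArg im h
  rw [gMap]
  push_cast
  field_simp
  linear_combination (ε : ℂ) ^ 2 * I_sq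

theorem gMap_zero (x ε : ℝ) : gMap x ε 0 = -(ε : ℂ) ^ 2 / x := by
  rw [gMap, zero_sub, zero_add, div_neg, neg_div]

namespace fMap

variable (x y : ℝ)

/-- The coefficients `a, b, c` of `fMap x ε`, as functions of `t = ε²`. -/
noncomputable def coeffA (t : ℂ) : ℂ := -(t * x) / (1 + x ^ 2)
noncomputable def coeffB (t : ℂ) : ℂ := 1 - t / (1 + x ^ 2)
noncomputable def coeffC (t : ℂ) : ℂ := -t / x

theorem eq_normalizingMobius_comp (ε : ℝ) :
    fMap x ε = normalizingMobius (coeffA x (ε ^ 2)) (coeffB x (ε ^ 2)) (coeffC x (ε ^ 2)) ∘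
      gMap x ε := by
  have ha : ((gMap x ε I).re : ℂ) = coeffA x (ε ^ 2) := by
    rw [gMap_I, coeffA]
    simp only [add_re, ofReal_re, mul_re, ofReal_im, I_re, I_im]
    push_cast; ring
  have hb : ((gMap x ε I).im : ℂ) = coeffB x (ε ^ 2) := by
    rw [gMap_I, coeffB]
    simp only [add_im, ofReal_re, mul_im, ofReal_im, I_re, I_im]
    push_cast; ring
  funext z
  simp only [fMap, Function.comp, normalizingMobius, ha, hb, gMap_zero, coeffC]

noncomputable def denom (t : ℂ) : ℂ :=
  coeffB x t ^ 2 + (coeffC x t - coeffA x t) * (y + t / (y - x) - coeffA x t)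

noncomputable def derivAtSq (t : ℂ) : ℂ :=
  (1 - t / (y - x) ^ 2) *
    (coeffB x t * (coeffB x t ^ 2 + (coeffC x t - coeffA x t) ^ 2) / denom x y t ^ 2)

theorem deriv_eq_derivAtSq {x y ε : ℝ} (hxy : y ≠ x) (hD : denom x y (ε ^ 2) ≠ 0) :
    deriv (fMap x ε) y = derivAtSq x y (ε ^ 2) := by
  have hyx : (y : ℂ) ≠ x := by exact_mod_cast hxy
  have hg := hasDerivAt_gMap x ε hyx
  have hm := hasDerivAt_normalizingMobius (a := coeffA x (ε ^ 2)) (b := coeffB x (ε ^ 2))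
    (c := coeffC x (ε ^ 2)) (w := gMap x ε y) hD
  rw [eq_normalizingMobius_comp, (hm.comp (y : ℂ) hg).deriv, derivAtSq, denom, gMap]
  ring

theorem denom_zero : denom x y 0 = 1 := by simp [denom, coeffA, coeffB, coeffC]

theorem derivAtSq_zero : derivAtSq x y 0 = 1 := by
  simp [derivAtSq, denom_zero, coeffA, coeffB, coeffC]

theorem continuous_denom : Continuous (denom x y) := by
  unfold denom coeffA coeffB coeffC
  fun_prop

theorem hasDerivAt_derivAtSq {x y : ℝ} (hx : x ≠ 0) (hxy : y ≠ x) :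
    HasDerivAt (derivAtSq x y) (((x + 2*y) / (x * (1 + x^2)) - 1 / (y - x)^2 : ℝ) : ℂ) 0 := by
  have hyx : (y : ℂ) - x ≠ 0 := sub_ne_zero.mpr (by exact_mod_cast hxy)
  have hx' : (x : ℂ) ≠ 0 := by exact_mod_cast hx
  have h1x : (1 + x ^ 2 : ℂ) ≠ 0 := by exact_mod_cast (by positivity : (1 + x ^ 2 : ℝ) ≠ 0)
  have hA : HasDerivAt (coeffA x) (-(1 * x) / (1 + x ^ 2)) 0 :=
    ((hasDerivAt_id _).mul_const _).neg.div_const _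
  have hB : HasDerivAt (coeffB x) (-(1 / (1 + x ^ 2))) 0 :=
    ((hasDerivAt_id _).div_const _).const_sub _
  have hC : HasDerivAt (coeffC x) (-1 / x) 0 := (hasDerivAt_id _).neg.div_const _
  have hW : HasDerivAt (fun t : ℂ => y + t / (y - x)) (1 / ((y : ℂ) - x)) 0 :=
    ((hasDerivAt_id _).div_const _).const_add _
  have hg' : HasDerivAt (fun t : ℂ => 1 - t / (y - x) ^ 2) (-(1 / ((y : ℂ) - x) ^ 2)) 0 :=
    ((hasDerivAt_id _).div_const _).const_sub _
  have hD : HasDerivAt (denom x y) _ 0 := (hB.pow 2).add ((hC.sub hA).mul (hW.sub hA))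
  have hD0 : denom x y 0 ^ 2 ≠ 0 := by simp [denom_zero]
  have hΦ := hg'.mul ((hB.mul ((hB.pow 2).add ((hC.sub hA).pow 2))).div (hD.pow 2) hD0)
  refine hΦ.congr_deriv ?_
  simp only [Pi.add_apply, Pi.sub_apply, Pi.mul_apply, Pi.div_apply, Pi.pow_apply, denom_zero,
    coeffA, coeffB, coeffC]
  push_cast
  field_simp
  ring

end fMap

theorem fMap_derivative_expansion_general (x y : ℝ) (hx : x ≠ 0) (hxy : y ≠ x) :
    Tendsto (fun ε : ℝ => (deriv (fMap x ε) (y : ℂ) - 1) / (ε : ℂ)^2)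
      (nhdsWithin 0 (Set.Ioi 0))
      (nhds (((x + 2*y) / (x * (1 + x^2)) - 1 / (y - x)^2 : ℝ) : ℂ)) := by
  have hlim := (tendsto_sub_div_sq_of_hasDerivAt (fMap.hasDerivAt_derivAtSq hx hxy)).mono_left
    (nhdsWithin_mono 0 fun ε (hε : 0 < ε) => hε.ne')
  rw [fMap.derivAtSq_zero] at hlim
  have hD : ∀ᶠ ε : ℝ in 𝓝 0, fMap.denom x y ((ε : ℂ) ^ 2) ≠ 0 := by
    have := ((fMap.continuous_denom x y).comp
      (by fun_prop : Continuous fun ε : ℝ => (ε : ℂ) ^ 2)).tendsto 0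
    simp only [Function.comp_def, ofReal_zero, zero_pow two_ne_zero, fMap.denom_zero] at this
    exact this.eventually_ne one_ne_zero
  refine hlim.congr' ?_
  filter_upwards [nhdsWithin_le_nhds hD] with ε hε
  rw [fMap.deriv_eq_derivAtSq hxy hε]

/-- `G(x,y) = lim_{ε→0} (f'_{x,ε}(y) - 1)/ε²` with
`G(x,y) = (x+2y)/(x(1+x²)) - 1/(y-x)²`. -/
theorem fMap_derivative_expansion (x y : ℝ) (hx : x ≠ 0) (hy : y ≠ 0) (hxy : y ≠ x) :
    Tendsto (fun ε : ℝ => (deriv (fMap x ε) (y : ℂ) - 1) / (ε : ℂ)^2)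
      (nhdsWithin 0 (Set.Ioi 0))
      (nhds (((x + 2*y) / (x * (1 + x^2)) - 1 / (y - x)^2 : ℝ) : ℂ)) :=
  fMap_derivative_expansion_general x y hx hxy
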